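/- arXiv:2311.09515 — 3 statements merged into one kernel-verified Lean document; each statement's English description precedes it below -/
import Mathlib

section
/- In the affine FIF framework with n ≥ 2 interpolation points, assume the indices are labeled so that s₁ ≤ s₂ ≤ … ≤ sₙ, where s_k = max{d_k, a_k + θ|c_k|}. Let γ_k = (b_k/(1−a_k), b_k c_k/((1−a_k)(1−d_k)) + e_k/(1−d_k)) and M = max_{i,j∈{1,…,n}} ρ(γᵢ, γⱼ). If G is a nonempty compact subset of ℝ² with G = ⋃_{k=1}^{n} f_k(G) (in particular if G is the graph of the affine fractal interpolation function), then G ⊆ (⋃_{k=1}^{n−1} R[γ_k, M s_k (1+sₙ)/(1−s_{n−1} sₙ)]) ∪ R[γₙ, M sₙ (1+s_{n−1})/(1−s_{n−1} sₙ)], where R[(x,y),r] = {(u,v) ∈ ℝ² : |x−u| + θ|y−v| ≤ r}. -/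
/-!
Each `f_k` contracts the rhombic distance `ρ` toward its fixed point `γ_k` with ratio `s_k`.
The radii `r_k` of the statement are chosen so that `s_k (ρ(γ_k, γ_j) + r_j) ≤ r_k` for all
`j, k`. Measure how far a point `p` lies outside the union of the rhombi by
`g p = min_j (ρ(γ_j, p) − r_j)`; the inequality on the radii gives `g (f_k q) ≤ s_k g q`.
Since `G = ⋃ f_k(G)` is bounded, `ε = sup_G g` then satisfies `ε ≤ (max_k s_k) max(ε, 0)`,
which forces `ε ≤ 0`, i.e. `G` lies in the union of the rhombi.
-/

open Set

section BallExcess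

variable {X ι : Type*}

noncomputable def ballExcess (ρ : X → X → ℝ) (γ : ι → X) (r : ι → ℝ) (p : X) : ℝ :=
  ⨅ i, (ρ (γ i) p - r i)

variable {ρ : X → X → ℝ} {γ : ι → X} {r : ι → ℝ} [Finite ι]

theorem ballExcess_le (p : X) (i : ι) : ballExcess ρ γ r p ≤ ρ (γ i) p - r i :=
  ciInf_le (Finite.bddBelow_range _) i

variable (ρ γ r) in
theorem exists_ballExcess_eq [Nonempty ι] (p : X) :
    ∃ i, ballExcess ρ γ r p = ρ (γ i) p - r i :=
  exists_eq_ciInf_of_finite.imp fun _ h => h.symm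

theorem ballExcess_apply_le [Nonempty ι] (hρ : ∀ p q z, ρ p z ≤ ρ p q + ρ q z)
    {f : X → X} {i : ι} {s : ℝ} (hs : 0 ≤ s) (hf : ∀ p, ρ (γ i) (f p) ≤ s * ρ (γ i) p)
    (hr : ∀ j, s * (ρ (γ i) (γ j) + r j) ≤ r i) (p : X) :
    ballExcess ρ γ r (f p) ≤ s * ballExcess ρ γ r p := by
  obtain ⟨j, hj⟩ := exists_ballExcess_eq ρ γ r p
  calc ballExcess ρ γ r (f p) ≤ ρ (γ i) (f p) - r i := ballExcess_le _ i
    _ ≤ s * (ρ (γ i) (γ j) + ρ (γ j) p) - s * (ρ (γ i) (γ j) + r j) :=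
      sub_le_sub ((hf p).trans (mul_le_mul_of_nonneg_left (hρ _ _ _) hs)) (hr j)
    _ = s * ballExcess ρ γ r p := by rw [hj]; ring

theorem subset_iUnion_of_subset_iUnion_image (hρ : ∀ p q z, ρ p z ≤ ρ p q + ρ q z)
    {f : ι → X → X} {s : ι → ℝ} (hs0 : ∀ i, 0 ≤ s i) (hs1 : ∀ i, s i < 1)
    (hf : ∀ i p, ρ (γ i) (f i p) ≤ s i * ρ (γ i) p)
    (hr : ∀ i j, s i * (ρ (γ i) (γ j) + r j) ≤ r i)
    {G : Set X} (hG : ∀ i, BddAbove (ρ (γ i) '' G)) (hGf : G ⊆ ⋃ i, f i '' G) :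
    G ⊆ ⋃ i, {p | ρ (γ i) p ≤ r i} := by
  rcases isEmpty_or_nonempty ι with hι | hι
  · simpa using hGf
  have i₀ : ι := Classical.arbitrary ι
  rcases G.eq_empty_or_nonempty with rfl | hGne
  · exact empty_subset _
  set g := ballExcess ρ γ r
  obtain ⟨C, hC⟩ := hG i₀
  have hg : BddAbove (g '' G) := ⟨C - r i₀, forall_mem_image.2 fun p hp =>
    (ballExcess_le p i₀).trans (sub_le_sub_right (hC (mem_image_of_mem _ hp)) _)⟩
  set ε := sSup (g '' G)
  have hgε : ∀ p ∈ G, g p ≤ ε := fun p hp => le_csSup hg (mem_image_of_mem g hp)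
  obtain ⟨k₀, hk₀⟩ := Finite.exists_max s
  have hstep : ∀ p ∈ G, g p ≤ s k₀ * max ε 0 := by
    intro p hp
    obtain ⟨i, q, hq, rfl⟩ := mem_iUnion.1 (hGf hp)
    calc g (f i q) ≤ s i * g q := ballExcess_apply_le hρ (hs0 i) (hf i) (hr i) q
      _ ≤ s i * max ε 0 := mul_le_mul_of_nonneg_left ((hgε q hq).trans (le_max_left _ _)) (hs0 i)
      _ ≤ s k₀ * max ε 0 := mul_le_mul_of_nonneg_right (hk₀ i) (le_max_right _ _)
  have hε : ε ≤ 0 := by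
    have hεs : ε ≤ s k₀ * max ε 0 := csSup_le (hGne.image g) (forall_mem_image.2 hstep)
    by_contra! hpos
    rw [max_eq_left hpos.le] at hεs
    nlinarith [hs1 k₀]
  intro p hp
  obtain ⟨i, hi⟩ := exists_ballExcess_eq ρ γ r p
  exact mem_iUnion.2 ⟨i, sub_nonpos.1 (hi.symm.trans_le ((hgε p hp).trans hε))⟩

end BallExcess

def rhombicDist (θ : ℝ) (p q : ℝ × ℝ) : ℝ := |p.1 - q.1| + θ * |p.2 - q.2|

theorem rhombicDist_self (θ : ℝ) (p : ℝ × ℝ) : rhombicDist θ p p = 0 := by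
  simp [rhombicDist]

theorem rhombicDist_triangle {θ : ℝ} (hθ : 0 ≤ θ) (p q z : ℝ × ℝ) :
    rhombicDist θ p z ≤ rhombicDist θ p q + rhombicDist θ q z := by
  have h₁ := abs_sub_le p.1 q.1 z.1
  have h₂ := mul_le_mul_of_nonneg_left (abs_sub_le p.2 q.2 z.2) hθ
  unfold rhombicDist
  linarith

theorem continuous_rhombicDist (θ : ℝ) (p : ℝ × ℝ) : Continuous (rhombicDist θ p) := by
  unfold rhombicDist
  fun_prop

def fifMap (a b c d e : ℝ) (p : ℝ × ℝ) : ℝ × ℝ := (a * p.1 + b, c * p.1 + d * p.2 + e)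

noncomputable def fifFixedPoint (a b c d e : ℝ) : ℝ × ℝ :=
  (b / (1 - a), b * c / ((1 - a) * (1 - d)) + e / (1 - d))

theorem fifMap_fifFixedPoint {a b c d e : ℝ} (ha : a ≠ 1) (hd : d ≠ 1) :
    fifMap a b c d e (fifFixedPoint a b c d e) = fifFixedPoint a b c d e := by
  have ha' : 1 - a ≠ 0 := sub_ne_zero.2 ha.symm
  have hd' : 1 - d ≠ 0 := sub_ne_zero.2 hd.symm
  simp only [fifMap, fifFixedPoint, Prod.mk.injEq]
  constructor <;> field_simp <;> ring

theorem rhombicDist_fifMap_le {θ a b c d e : ℝ} (hθ : 0 ≤ θ) (ha : 0 ≤ a) (hd : 0 ≤ d)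
    (p q : ℝ × ℝ) :
    rhombicDist θ (fifMap a b c d e p) (fifMap a b c d e q) ≤
      max d (a + θ * |c|) * rhombicDist θ p q := by
  have hx : |a * p.1 + b - (a * q.1 + b)| = a * |p.1 - q.1| := by
    rw [show a * p.1 + b - (a * q.1 + b) = a * (p.1 - q.1) by ring, abs_mul, abs_of_nonneg ha]
  have hy : |c * p.1 + d * p.2 + e - (c * q.1 + d * q.2 + e)| ≤
      |c| * |p.1 - q.1| + d * |p.2 - q.2| := by
    calc _ = |c * (p.1 - q.1) + d * (p.2 - q.2)| := by congr 1; ring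
      _ ≤ |c * (p.1 - q.1)| + |d * (p.2 - q.2)| := abs_add_le _ _
      _ = |c| * |p.1 - q.1| + d * |p.2 - q.2| := by rw [abs_mul, abs_mul, abs_of_nonneg hd]
  have h₁ := mul_le_mul_of_nonneg_right (le_max_right d (a + θ * |c|)) (abs_nonneg (p.1 - q.1))
  have h₂ := mul_le_mul_of_nonneg_right (le_max_left d (a + θ * |c|))
    (mul_nonneg hθ (abs_nonneg (p.2 - q.2)))
  have h₃ := mul_le_mul_of_nonneg_left hy hθ
  simp only [rhombicDist, fifMap, hx]
  linarith

theorem rhombicDist_fifFixedPoint_fifMap_le {θ a b c d e : ℝ} (hθ : 0 ≤ θ) (ha : 0 ≤ a)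
    (ha1 : a < 1) (hd : 0 ≤ d) (hd1 : d < 1) (p : ℝ × ℝ) :
    rhombicDist θ (fifFixedPoint a b c d e) (fifMap a b c d e p) ≤
      max d (a + θ * |c|) * rhombicDist θ (fifFixedPoint a b c d e) p := by
  conv_lhs => rw [← fifMap_fifFixedPoint ha1.ne hd1.ne]
  exact rhombicDist_fifMap_le hθ ha hd _ _

theorem StrictMono.sub_div_sub_mem_Ico {m : ℕ} {x : Fin (m + 3) → ℝ} (hx : StrictMono x)
    (k : Fin (m + 2)) :
    (x k.succ - x k.castSucc) / (x (Fin.last (m + 2)) - x 0) ∈ Ico 0 1 := by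
  have hlen : 0 < x (Fin.last (m + 2)) - x 0 := sub_pos.2 (hx (by simp [Fin.lt_def]))
  have h₀ : x 0 ≤ x k.castSucc := hx.monotone (Fin.zero_le _)
  have hₗ : x k.succ ≤ x (Fin.last (m + 2)) := hx.monotone (Fin.le_last _)
  -- with at least two subintervals, `k` misses the first or the last one
  have hlt : x k.succ - x k.castSucc < x (Fin.last (m + 2)) - x 0 := by
    by_cases hk : k = 0
    · have : x k.succ < x (Fin.last (m + 2)) := hx (by rw [hk, Fin.lt_def]; simp)
      linarith
    · have : x 0 < x k.castSucc := hx (Fin.castSucc_pos_iff.2 ((Fin.pos_iff_ne_zero' k).2 hk))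
      linarith
  exact ⟨div_nonneg (sub_nonneg.2 (hx.monotone (Fin.castSucc_le_succ k))) hlen.le,
    (div_lt_one hlen).2 hlt⟩

theorem nonneg_and_add_mul_abs_lt_one_of_eq_ite {ι : Type*} [Finite ι] [Nonempty ι]
    {a c : ι → ℝ} (ha : ∀ k, a k < 1) [Decidable (∀ k, c k = 0)] {θ : ℝ}
    (hθ : θ = if ∀ k, c k = 0 then 1 else (1 - ⨆ k, a k) / (2 * ⨆ k, |c k|)) :
    0 ≤ θ ∧ ∀ k, a k + θ * |c k| < 1 := by
  split_ifs at hθ with hc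
  · exact ⟨hθ ▸ zero_le_one, fun k => by simpa [hθ, hc k] using ha k⟩
  obtain ⟨k₁, hk₁⟩ := not_forall.1 hc
  obtain ⟨k₀, hk₀⟩ := Finite.exists_max a
  have hA : (⨆ k, a k) < 1 := (ciSup_le hk₀).trans_lt (ha k₀)
  have hC : 0 < ⨆ k, |c k| :=
    (abs_pos.2 hk₁).trans_le (le_ciSup (Finite.bddAbove_range fun k => |c k|) k₁)
  have hθ0 : 0 ≤ θ := hθ ▸ div_nonneg (by linarith) (by linarith)
  refine ⟨hθ0, fun k => ?_⟩
  have hak : a k ≤ ⨆ k, a k := le_ciSup (Finite.bddAbove_range _) k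
  have hθc : θ * |c k| ≤ (1 - ⨆ k, a k) / 2 := by
    calc θ * |c k| ≤ θ * ⨆ k, |c k| :=
          mul_le_mul_of_nonneg_left (le_ciSup (Finite.bddAbove_range fun k => |c k|) k) hθ0
      _ = (1 - ⨆ k, a k) / 2 := by rw [hθ]; field_simp
  linarith

theorem mul_add_mul_div_le {M D t v w w' : ℝ} (hM : 0 ≤ M) (hD : 0 < D) (ht : 0 ≤ t)
    (h : D + v * w' ≤ w) : t * (M + M * v * w' / D) ≤ M * t * w / D := by
  calc t * (M + M * v * w' / D) = M * t * (D + v * w') / D := by field_simp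
    _ ≤ M * t * w / D := by gcongr

theorem one_sub_mul_pos_of_mem_Ico {σ τ : ℝ} (hσ : σ ∈ Ico 0 1) (hτ : τ ∈ Ico 0 1) :
    0 < 1 - σ * τ := by
  nlinarith [hσ.1, hσ.2, hτ.1, hτ.2]

section RhombusRadius

variable {m : ℕ} (s : Fin (m + 2) → ℝ) (M : ℝ)

noncomputable def rhombusRadius : Fin (m + 2) → ℝ :=
  Fin.lastCases (motive := fun _ => ℝ)
    (M * s (Fin.last (m + 1)) * (1 + s (Fin.last m).castSucc) /
      (1 - s (Fin.last m).castSucc * s (Fin.last (m + 1))))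
    fun k => M * s k.castSucc * (1 + s (Fin.last (m + 1))) /
      (1 - s (Fin.last m).castSucc * s (Fin.last (m + 1)))

variable {s M}

theorem rhombusRadius_nonneg (hs0 : ∀ k, 0 ≤ s k) (hs1 : ∀ k, s k < 1) (hM : 0 ≤ M)
    (k : Fin (m + 2)) : 0 ≤ rhombusRadius s M k := by
  have hD := one_sub_mul_pos_of_mem_Ico ⟨hs0 (Fin.last m).castSucc, hs1 _⟩
    ⟨hs0 (Fin.last (m + 1)), hs1 _⟩
  induction k using Fin.lastCases with
  | last =>
    simp only [rhombusRadius, Fin.lastCases_last]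
    exact div_nonneg (mul_nonneg (mul_nonneg hM (hs0 _)) (by linarith [hs0 (Fin.last m).castSucc]))
      hD.le
  | cast k =>
    simp only [rhombusRadius, Fin.lastCases_castSucc]
    exact div_nonneg (mul_nonneg (mul_nonneg hM (hs0 _)) (by linarith [hs0 (Fin.last (m + 1))]))
      hD.le

theorem mul_add_rhombusRadius_le (hs0 : ∀ k, 0 ≤ s k) (hs1 : ∀ k, s k < 1) (hmono : Monotone s)
    (hM : 0 ≤ M) {j k : Fin (m + 2)} (hjk : j ≠ k) :
    s k * (M + rhombusRadius s M j) ≤ rhombusRadius s M k := by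
  set σ := s (Fin.last m).castSucc
  set τ := s (Fin.last (m + 1))
  have hσ : 0 ≤ σ := hs0 _
  have hστ : σ ≤ τ := hmono (Fin.le_last _)
  have hD : 0 < 1 - σ * τ := one_sub_mul_pos_of_mem_Ico ⟨hσ, hs1 _⟩ ⟨hs0 _, hs1 _⟩
  have hle : ∀ i : Fin (m + 1), s i.castSucc ≤ σ := fun i =>
    hmono (Fin.castSucc_le_castSucc_iff.2 (Fin.le_last i))
  induction j using Fin.lastCases with
  | last =>
    induction k using Fin.lastCases with
    | last => exact absurd rfl hjk
    | cast k =>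
      simp only [rhombusRadius, Fin.lastCases_last, Fin.lastCases_castSucc]
      exact mul_add_mul_div_le hM hD (hs0 _) (by linarith)
  | cast j =>
    have hj := hle j
    induction k using Fin.lastCases with
    | last =>
      simp only [rhombusRadius, Fin.lastCases_last, Fin.lastCases_castSucc]
      exact mul_add_mul_div_le hM hD (hs0 _) (by nlinarith)
    | cast k =>
      simp only [rhombusRadius, Fin.lastCases_castSucc]
      exact mul_add_mul_div_le hM hD (hs0 _) (by nlinarith)

theorem mul_add_rhombusRadius_le_of_le (hs0 : ∀ k, 0 ≤ s k) (hs1 : ∀ k, s k < 1)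
    (hmono : Monotone s) {δ : Fin (m + 2) → Fin (m + 2) → ℝ} (hδ : ∀ i, δ i i = 0)
    (hδM : ∀ i j, δ i j ≤ M) (i j : Fin (m + 2)) :
    s i * (δ i j + rhombusRadius s M j) ≤ rhombusRadius s M i := by
  have hM : 0 ≤ M := hδ i ▸ hδM i i
  rcases eq_or_ne j i with rfl | hji
  · rw [hδ, zero_add]
    exact mul_le_of_le_one_left (rhombusRadius_nonneg hs0 hs1 hM j) (hs1 j).le
  · exact (mul_le_mul_of_nonneg_left (by linarith [hδM i j]) (hs0 i)).trans
      (mul_add_rhombusRadius_le hs0 hs1 hmono hM hji)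

end RhombusRadius

theorem fif_graph_covered_by_rhombi_general
    (n : ℕ) (x : Fin (n + 3) → ℝ) (hx : StrictMono x)
    (d : Fin (n + 2) → ℝ) (hd : ∀ k, 0 ≤ d k ∧ d k < 1)
    (a b c e : Fin (n + 2) → ℝ)
    (ha : ∀ k, a k = (x k.succ - x k.castSucc) / (x (Fin.last (n + 2)) - x 0))
    (θ : ℝ)
    (hθ : θ = if ∀ k, c k = 0 then 1 else (1 - ⨆ k, a k) / (2 * ⨆ k, |c k|))
    (f : Fin (n + 2) → ℝ × ℝ → ℝ × ℝ)
    (hf : ∀ k (p : ℝ × ℝ), f k p = (a k * p.1 + b k, c k * p.1 + d k * p.2 + e k))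
    (s : Fin (n + 2) → ℝ)
    (hs : ∀ k, s k = max (d k) (a k + θ * |c k|))
    (hmono : Monotone s)
    (γ : Fin (n + 2) → ℝ × ℝ)
    (hγ : ∀ k, γ k = (b k / (1 - a k),
        b k * c k / ((1 - a k) * (1 - d k)) + e k / (1 - d k)))
    (M : ℝ)
    (hM : M = ⨆ p : Fin (n + 2) × Fin (n + 2),
        (|(γ p.1).1 - (γ p.2).1| + θ * |(γ p.1).2 - (γ p.2).2|))
    (G : Set (ℝ × ℝ)) (hGc : IsCompact G)
    (hGfix : G = ⋃ k, f k '' G) :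
    G ⊆ (⋃ k : Fin (n + 1),
          {q : ℝ × ℝ | |(γ k.castSucc).1 - q.1| + θ * |(γ k.castSucc).2 - q.2| ≤
            M * s k.castSucc * (1 + s (Fin.last (n + 1))) /
              (1 - s ((Fin.last n).castSucc) * s (Fin.last (n + 1)))}) ∪
        {q : ℝ × ℝ | |(γ (Fin.last (n + 1))).1 - q.1| +
            θ * |(γ (Fin.last (n + 1))).2 - q.2| ≤
          M * s (Fin.last (n + 1)) * (1 + s ((Fin.last n).castSucc)) /
            (1 - s ((Fin.last n).castSucc) * s (Fin.last (n + 1)))} := by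
  have ha01 : ∀ k, 0 ≤ a k ∧ a k < 1 := fun k => ha k ▸ hx.sub_div_sub_mem_Ico k
  obtain ⟨hθ0, hθa⟩ := nonneg_and_add_mul_abs_lt_one_of_eq_ite (fun k => (ha01 k).2) hθ
  have hs0 : ∀ k, 0 ≤ s k := fun k => hs k ▸ le_max_of_le_left (hd k).1
  have hs1 : ∀ k, s k < 1 := fun k => hs k ▸ max_lt (hd k).2 (hθa k)
  have hcontr : ∀ k p, rhombicDist θ (γ k) (f k p) ≤ s k * rhombicDist θ (γ k) p := by
    intro k p
    rw [show f k = fifMap (a k) (b k) (c k) (d k) (e k) from funext (hf k), hγ k, hs k]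
    exact rhombicDist_fifFixedPoint_fifMap_le hθ0 (ha01 k).1 (ha01 k).2 (hd k).1 (hd k).2 p
  have hγM : ∀ i j, rhombicDist θ (γ i) (γ j) ≤ M := fun i j => by
    rw [hM]
    exact le_ciSup (Finite.bddAbove_range fun p : Fin (n + 2) × Fin (n + 2) =>
      rhombicDist θ (γ p.1) (γ p.2)) (i, j)
  have hcover := subset_iUnion_of_subset_iUnion_image (rhombicDist_triangle hθ0) hs0 hs1 hcontr
    (mul_add_rhombusRadius_le_of_le hs0 hs1 hmono (fun i => rhombicDist_self θ (γ i)) hγM)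
    (fun i => hGc.bddAbove_image (continuous_rhombicDist θ (γ i)).continuousOn) hGfix.subset
  intro p hp
  obtain ⟨j, hj⟩ := mem_iUnion.1 (hcover hp)
  induction j using Fin.lastCases with
  | last =>
    simp only [rhombusRadius, Fin.lastCases_last, mem_ofPred_eq] at hj
    exact Or.inr hj
  | cast k =>
    simp only [rhombusRadius, Fin.lastCases_castSucc, mem_ofPred_eq] at hj
    exact Or.inl (mem_iUnion.2 ⟨k, hj⟩)

/-- (Covering of the graph of a FIF.)  In the affine FIF framework
with `n + 2 ≥ 2` maps, with the indices labeled so that the contraction ratios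
`s_k = max{d_k, a_k + θ|c_k|}` are nondecreasing, with fixed points
`γ_k = (b_k/(1−a_k), b_k c_k/((1−a_k)(1−d_k)) + e_k/(1−d_k))` and
`M = max_{i,j} ρ(γ_i, γ_j)`:  any nonempty compact `G ⊆ ℝ²` with `G = ⋃_k f_k(G)`
(in particular the graph of the FIF) is contained in the union of the closed
`ρ`-balls (rhombi) `R[γ_k, M s_k (1+s_last)/(1 − s_{last−1} s_last)]` for `k`
before the last index, together with
`R[γ_last, M s_last (1+s_{last−1})/(1 − s_{last−1} s_last)]`. -/
theorem fif_graph_covered_by_rhombi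
    (n : ℕ) (x y : Fin (n + 3) → ℝ) (hx : StrictMono x)
    (d : Fin (n + 2) → ℝ) (hd : ∀ k, 0 ≤ d k ∧ d k < 1)
    (a b c e : Fin (n + 2) → ℝ)
    (ha : ∀ k, a k = (x k.succ - x k.castSucc) / (x (Fin.last (n + 2)) - x 0))
    (hb : ∀ k, b k = (x (Fin.last (n + 2)) * x k.castSucc - x 0 * x k.succ) /
        (x (Fin.last (n + 2)) - x 0))
    (hc : ∀ k, c k = (y k.succ - y k.castSucc) / (x (Fin.last (n + 2)) - x 0) -
        d k * (y (Fin.last (n + 2)) - y 0) / (x (Fin.last (n + 2)) - x 0))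
    (he : ∀ k, e k = (x (Fin.last (n + 2)) * y k.castSucc - x 0 * y k.succ) /
        (x (Fin.last (n + 2)) - x 0) -
        d k * (x (Fin.last (n + 2)) * y 0 - x 0 * y (Fin.last (n + 2))) /
        (x (Fin.last (n + 2)) - x 0))
    (θ : ℝ)
    (hθ : θ = if ∀ k, c k = 0 then 1 else (1 - ⨆ k, a k) / (2 * ⨆ k, |c k|))
    (f : Fin (n + 2) → ℝ × ℝ → ℝ × ℝ)
    (hf : ∀ k (p : ℝ × ℝ), f k p = (a k * p.1 + b k, c k * p.1 + d k * p.2 + e k))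
    (s : Fin (n + 2) → ℝ)
    (hs : ∀ k, s k = max (d k) (a k + θ * |c k|))
    (hmono : Monotone s)
    (γ : Fin (n + 2) → ℝ × ℝ)
    (hγ : ∀ k, γ k = (b k / (1 - a k),
        b k * c k / ((1 - a k) * (1 - d k)) + e k / (1 - d k)))
    (M : ℝ)
    (hM : M = ⨆ p : Fin (n + 2) × Fin (n + 2),
        (|(γ p.1).1 - (γ p.2).1| + θ * |(γ p.1).2 - (γ p.2).2|))
    (G : Set (ℝ × ℝ)) (hG : G.Nonempty) (hGc : IsCompact G)
    (hGfix : G = ⋃ k, f k '' G) :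
    G ⊆ (⋃ k : Fin (n + 1),
          {q : ℝ × ℝ | |(γ k.castSucc).1 - q.1| + θ * |(γ k.castSucc).2 - q.2| ≤
            M * s k.castSucc * (1 + s (Fin.last (n + 1))) /
              (1 - s ((Fin.last n).castSucc) * s (Fin.last (n + 1)))}) ∪
        {q : ℝ × ℝ | |(γ (Fin.last (n + 1))).1 - q.1| +
            θ * |(γ (Fin.last (n + 1))).2 - q.2| ≤
          M * s (Fin.last (n + 1)) * (1 + s ((Fin.last n).castSucc)) /
            (1 - s ((Fin.last n).castSucc) * s (Fin.last (n + 1)))} :=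
  fif_graph_covered_by_rhombi_general n x hx d hd a b c e ha θ hθ f hf s hs hmono γ hγ M hM G hGc
    hGfix
end

section
/- In the affine FIF framework with n ≥ 2 interpolation points, with A and B defined as in the range estimate (Theorem on the range of f), if G is a nonempty compact subset of ℝ² with G = ⋃_{k=1}^{n} f_k(G), then G ⊆ [x₀, xₙ] × [A, B]; in particular the graph of the affine fractal interpolation function f is contained in [a,b] × [A,B]. -/
/-!
Each `f_k` is a contraction with factor `s_k < 1` for the weighted taxicab metric `ρ`, and it
fixes `γ_k`. Suppose the radii `C_k` satisfy `s_k (C_j + ρ(γ_j, γ_k)) ≤ C_k` for all `j, k`.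
Then the continuous function `h p = min_k (ρ(p, γ_k) - C_k)` satisfies `h (f_k p) ≤ s_k h(p)`.
If `G` is compact and `G = ⋃ f_k(G)`, a maximiser of `h` on `G` is some `f_k q` with `q ∈ G`, so
the maximum is `≤ 0`: every point of `G` lies within `C_k` of some `γ_k`. The radii of the paper
satisfy this condition because `ρ(γ_j, γ_k) ≤ M`, and `ρ(z, γ_k) ≤ C_k` puts `z.2` within
`C_k / θ` of `γ_k.2`, hence in `[A, B]`. The same maximum argument applied to the first
coordinate, on which `f_k` is the affine map of `[x₀, xₙ]` onto `[x_{k-1}, x_k]`, gives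
`z.1 ∈ [x₀, xₙ]`.
-/

open Set

theorem IsCompact.le_of_eq_iUnion_image {X ι : Type*} [TopologicalSpace X] {G : Set X}
    (hG : IsCompact G) {f : ι → X → X} (hGfix : G = ⋃ k, f k '' G) {φ : X → ℝ}
    (hφ : ContinuousOn φ G) {a b : ι → ℝ} {L : ℝ} (hφf : ∀ k p, φ (f k p) ≤ a k * φ p + b k)
    (ha0 : ∀ k, 0 ≤ a k) (ha1 : ∀ k, a k < 1) (hL : ∀ k, a k * L + b k ≤ L) :
    ∀ z ∈ G, φ z ≤ L := by
  intro z hz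
  obtain ⟨z₀, hz₀, hmax⟩ := hG.exists_isMaxOn ⟨z, hz⟩ hφ
  obtain ⟨k, q, hq, rfl⟩ : ∃ k, ∃ q ∈ G, f k q = z₀ := by
    rw [hGfix] at hz₀
    simpa using hz₀
  have hq_le : φ q ≤ φ (f k q) := hmax hq
  have hz₀_le : φ (f k q) ≤ L := by
    nlinarith [hφf k q, hL k, ha1 k, mul_le_mul_of_nonneg_left hq_le (ha0 k)]
  exact (hmax hz).trans hz₀_le

theorem IsCompact.exists_le_of_eq_iUnion_image {X ι : Type*} [TopologicalSpace X] [Fintype ι]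
    {G : Set X} (hG : IsCompact G) {f : ι → X → X} (hGfix : G = ⋃ k, f k '' G)
    {ρ : X → X → ℝ} (hρ : ∀ p q r, ρ p r ≤ ρ p q + ρ q r)
    {s : ι → ℝ} (hs0 : ∀ k, 0 ≤ s k) (hs1 : ∀ k, s k < 1)
    (hf : ∀ k p q, ρ (f k p) (f k q) ≤ s k * ρ p q) {γ : ι → X} (hγ : ∀ k, f k (γ k) = γ k)
    (hργ : ∀ k, ContinuousOn (ρ · (γ k)) G) {C : ι → ℝ}
    (hC : ∀ j k, s k * (C j + ρ (γ j) (γ k)) ≤ C k) :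
    ∀ z ∈ G, ∃ k, ρ z (γ k) ≤ C k := by
  intro z hz
  have hι : (Finset.univ : Finset ι).Nonempty := by
    rw [hGfix] at hz
    obtain ⟨k, -⟩ := mem_iUnion.1 hz
    exact ⟨k, Finset.mem_univ k⟩
  let excess (p : X) : ℝ := Finset.univ.inf' hι fun k ↦ ρ p (γ k) - C k
  have hcontract : ∀ k p, excess (f k p) ≤ s k * excess p := by
    intro k p
    obtain ⟨j, -, hj⟩ := Finset.exists_mem_eq_inf' hι fun k ↦ ρ p (γ k) - C k
    have hfk : ρ (f k p) (γ k) ≤ s k * ρ p (γ k) := by simpa only [hγ] using hf k p (γ k)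
    calc excess (f k p) ≤ ρ (f k p) (γ k) - C k := Finset.inf'_le _ (Finset.mem_univ k)
      _ ≤ s k * (ρ p (γ j) + ρ (γ j) (γ k)) - C k := by
        linarith [mul_le_mul_of_nonneg_left (hρ p (γ j) (γ k)) (hs0 k)]
      _ ≤ s k * excess p := by
        rw [show excess p = ρ p (γ j) - C j from hj]
        linarith [hC j k]
  have hexcess_cont : ContinuousOn excess G := ContinuousOn.finset_inf'_apply hι fun k _ ↦
    (hργ k).sub continuousOn_const
  obtain ⟨k, -, hk⟩ := Finset.exists_mem_eq_inf' hι fun k ↦ ρ z (γ k) - C k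
  have hz_le : excess z ≤ 0 :=
    hG.le_of_eq_iUnion_image hGfix hexcess_cont (b := 0) (fun k p ↦ by simpa using hcontract k p)
      hs0 hs1 (fun k ↦ by simp) z hz
  exact ⟨k, by linarith [show excess z = ρ z (γ k) - C k from hk]⟩

def weightedTaxicab (θ : ℝ) (p q : ℝ × ℝ) : ℝ := |p.1 - q.1| + θ * |p.2 - q.2|

section WeightedTaxicab

variable {θ : ℝ}

theorem weightedTaxicab_triangle (hθ : 0 ≤ θ) (p q r : ℝ × ℝ) :
    weightedTaxicab θ p r ≤ weightedTaxicab θ p q + weightedTaxicab θ q r := by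
  unfold weightedTaxicab
  nlinarith [abs_sub_le p.1 q.1 r.1, mul_le_mul_of_nonneg_left (abs_sub_le p.2 q.2 r.2) hθ]

theorem continuous_weightedTaxicab_left (q : ℝ × ℝ) : Continuous (weightedTaxicab θ · q) := by
  unfold weightedTaxicab
  fun_prop

theorem snd_mem_Icc_of_weightedTaxicab_le (hθ : 0 < θ) {p q : ℝ × ℝ} {C : ℝ}
    (h : weightedTaxicab θ p q ≤ C) : p.2 ∈ Icc (q.2 - C / θ) (q.2 + C / θ) := by
  have hθC : θ * |p.2 - q.2| ≤ C := by
    unfold weightedTaxicab at h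
    linarith [abs_nonneg (p.1 - q.1)]
  have hbound : |p.2 - q.2| ≤ C / θ := by
    rw [le_div_iff₀ hθ]
    linarith
  obtain ⟨hlo, hhi⟩ := abs_le.1 hbound
  constructor <;> linarith

theorem weightedTaxicab_fifMap_le (hθ : 0 ≤ θ) {a b c d e : ℝ} (ha : 0 ≤ a) (hd : 0 ≤ d)
    (p q : ℝ × ℝ) :
    weightedTaxicab θ (fifMap a b c d e p) (fifMap a b c d e q) ≤
      max d (a + θ * |c|) * weightedTaxicab θ p q := by
  set u := p.1 - q.1
  set v := p.2 - q.2
  have hfst : |a * p.1 + b - (a * q.1 + b)| = a * |u| := by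
    rw [show a * p.1 + b - (a * q.1 + b) = a * u by ring, abs_mul, abs_of_nonneg ha]
  have hsnd : |c * p.1 + d * p.2 + e - (c * q.1 + d * q.2 + e)| ≤ |c| * |u| + d * |v| := by
    rw [show c * p.1 + d * p.2 + e - (c * q.1 + d * q.2 + e) = c * u + d * v by ring]
    exact (abs_add_le _ _).trans_eq (by rw [abs_mul, abs_mul, abs_of_nonneg hd])
  simp only [weightedTaxicab, fifMap]
  rw [hfst]
  nlinarith [mul_le_mul_of_nonneg_left hsnd hθ, abs_nonneg u, abs_nonneg v,
    mul_le_mul_of_nonneg_right (le_max_right d (a + θ * |c|)) (abs_nonneg u),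
    mul_le_mul_of_nonneg_right (le_max_left d (a + θ * |c|)) (mul_nonneg hθ (abs_nonneg v))]

end WeightedTaxicab

theorem affine_interpolation_endpoints {x₀ xₙ u v a b : ℝ} (h : x₀ ≠ xₙ)
    (ha : a = (v - u) / (xₙ - x₀)) (hb : b = (xₙ * u - x₀ * v) / (xₙ - x₀)) :
    a * x₀ + b = u ∧ a * xₙ + b = v := by
  have h' : xₙ - x₀ ≠ 0 := sub_ne_zero.2 h.symm
  subst ha hb
  constructor <;> field_simp <;> ring

theorem succ_sub_castSucc_lt_last_sub_zero {n : ℕ} {x : Fin (n + 3) → ℝ} (hx : StrictMono x)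
    (k : Fin (n + 2)) : x k.succ - x k.castSucc < x (Fin.last (n + 2)) - x 0 := by
  have h0 : x 0 ≤ x k.castSucc := hx.monotone (Fin.zero_le _)
  have hN : x k.succ ≤ x (Fin.last (n + 2)) := hx.monotone (Fin.le_last _)
  rcases eq_or_ne k 0 with rfl | hk
  · have : x 1 < x (Fin.last (n + 2)) := hx (by simp [Fin.lt_def])
    rw [Fin.succ_zero_eq_one, Fin.castSucc_zero]
    linarith
  · have : x 0 < x k.castSucc := hx (Fin.castSucc_pos (Fin.pos_iff_ne_zero.2 hk))
    linarith

theorem theta_pos_and_add_mul_abs_lt_one {ι : Type*} [Finite ι] {a c : ι → ℝ}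
    [Decidable (∀ k, c k = 0)] (ha : ∀ k, a k < 1) {θ : ℝ}
    (hθ : θ = if ∀ k, c k = 0 then 1 else (1 - ⨆ k, a k) / (2 * ⨆ k, |c k|)) :
    0 < θ ∧ ∀ k, a k + θ * |c k| < 1 := by
  split_ifs at hθ with hc
  · subst hθ
    exact ⟨one_pos, fun k ↦ by simpa [hc k] using ha k⟩
  obtain ⟨k₀, hk₀⟩ := not_forall.1 hc
  have : Nonempty ι := ⟨k₀⟩
  have ha_le : ∀ k, a k ≤ ⨆ k, a k := le_ciSup (finite_range a).bddAbove
  have hc_le : ∀ k, |c k| ≤ ⨆ k, |c k| := le_ciSup (finite_range _).bddAbove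
  obtain ⟨m, hm⟩ := Finite.exists_max a
  have hsup_a : (⨆ k, a k) < 1 := (ciSup_le hm).trans_lt (ha m)
  have hsup_c : 0 < ⨆ k, |c k| := (abs_pos.2 hk₀).trans_le (hc_le k₀)
  have hθ0 : 0 < θ := hθ ▸ div_pos (by linarith) (by linarith)
  refine ⟨hθ0, fun k ↦ ?_⟩
  have : θ * |c k| ≤ (1 - ⨆ k, a k) / 2 := by
    calc θ * |c k| ≤ θ * ⨆ k, |c k| := mul_le_mul_of_nonneg_left (hc_le k) hθ0.le
      _ = (1 - ⨆ k, a k) / 2 := by rw [hθ]; field_simp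
  linarith [ha_le k]

section RangeRadius

variable {n : ℕ} {M : ℝ} {s : Fin (n + 2) → ℝ}

variable (M s) in
/-- The radii `C_k` of the range estimate; for monotone `s`, the factors `s (Fin.last (n + 1))` and
`s (Fin.last n).castSucc` are the paper's `sₙ` and `s_{n-1}`. -/
noncomputable def rangeRadius : Fin (n + 2) → ℝ :=
  Fin.lastCases
    (M * s (Fin.last (n + 1)) * (1 + s (Fin.last n).castSucc) /
      (1 - s (Fin.last n).castSucc * s (Fin.last (n + 1))))
    fun k ↦ M * s k.castSucc * (1 + s (Fin.last (n + 1))) /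
      (1 - s (Fin.last n).castSucc * s (Fin.last (n + 1)))

theorem rangeRadius_last :
    rangeRadius M s (Fin.last (n + 1)) = M * s (Fin.last (n + 1)) * (1 + s (Fin.last n).castSucc) /
      (1 - s (Fin.last n).castSucc * s (Fin.last (n + 1))) :=
  Fin.lastCases_last

theorem rangeRadius_castSucc (i : Fin (n + 1)) :
    rangeRadius M s i.castSucc = M * s i.castSucc * (1 + s (Fin.last (n + 1))) /
      (1 - s (Fin.last n).castSucc * s (Fin.last (n + 1))) :=
  Fin.lastCases_castSucc i

theorem rangeRadius_denom_pos (hs0 : ∀ k, 0 ≤ s k) (hs1 : ∀ k, s k < 1) :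
    0 < 1 - s (Fin.last n).castSucc * s (Fin.last (n + 1)) := by
  nlinarith [hs0 (Fin.last n).castSucc, hs0 (Fin.last (n + 1)), hs1 (Fin.last n).castSucc,
    hs1 (Fin.last (n + 1))]

theorem rangeRadius_nonneg (hM : 0 ≤ M) (hs0 : ∀ k, 0 ≤ s k) (hs1 : ∀ k, s k < 1)
    (k : Fin (n + 2)) : 0 ≤ rangeRadius M s k := by
  have hΔ := rangeRadius_denom_pos hs0 hs1
  induction k using Fin.lastCases with
  | last =>
    have := hs0 (Fin.last n).castSucc
    have := hs0 (Fin.last (n + 1))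
    rw [rangeRadius_last]
    positivity
  | cast i =>
    have := hs0 i.castSucc
    have := hs0 (Fin.last (n + 1))
    rw [rangeRadius_castSucc]
    positivity

theorem rangeRadius_le_last (hM : 0 ≤ M) (hs0 : ∀ k, 0 ≤ s k) (hs1 : ∀ k, s k < 1)
    (hmono : Monotone s) (j : Fin (n + 2)) :
    rangeRadius M s j ≤ rangeRadius M s (Fin.last (n + 1)) := by
  induction j using Fin.lastCases with
  | last => exact le_rfl
  | cast i =>
    rw [rangeRadius_castSucc, rangeRadius_last]
    have hiu : s i.castSucc ≤ s (Fin.last n).castSucc :=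
      hmono (Fin.castSucc_le_castSucc_iff.2 (Fin.le_last i))
    have huv : s (Fin.last n).castSucc ≤ s (Fin.last (n + 1)) := hmono (Fin.le_last _)
    refine div_le_div_of_nonneg_right ?_ (rangeRadius_denom_pos hs0 hs1).le
    have h1 : 0 ≤ M * (s (Fin.last n).castSucc - s i.castSucc) * (1 + s (Fin.last (n + 1))) :=
      mul_nonneg (mul_nonneg hM (by linarith)) (by linarith [hs0 (Fin.last (n + 1))])
    have h2 : 0 ≤ M * (s (Fin.last (n + 1)) - s (Fin.last n).castSucc) :=
      mul_nonneg hM (by linarith)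
    nlinarith

theorem mul_rangeRadius_add_le (hM : 0 ≤ M) (hs0 : ∀ k, 0 ≤ s k) (hs1 : ∀ k, s k < 1)
    (hmono : Monotone s) {j k : Fin (n + 2)} (hjk : j ≠ k) :
    s k * (rangeRadius M s j + M) ≤ rangeRadius M s k := by
  have hΔ := rangeRadius_denom_pos hs0 hs1
  -- The radii are chosen so that `s k * (C + M) = rangeRadius M s k`, where `C` is the radius of
  -- the last index if `k` is not last, and of the second-to-last index otherwise.
  have hself : ∀ t t' w : ℝ, t * t' = s (Fin.last n).castSucc * s (Fin.last (n + 1)) →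
      w * (M * t * (1 + t') / (1 - s (Fin.last n).castSucc * s (Fin.last (n + 1))) + M) =
        M * w * (1 + t) / (1 - s (Fin.last n).castSucc * s (Fin.last (n + 1))) := by
    intro t t' w htt'
    field_simp
    linear_combination M * w * htt'
  induction k using Fin.lastCases with
  | last =>
    obtain ⟨i, rfl⟩ := Fin.exists_castSucc_eq.2 hjk
    have hi : rangeRadius M s i.castSucc ≤ rangeRadius M s (Fin.last n).castSucc := by
      rw [rangeRadius_castSucc, rangeRadius_castSucc]
      have := hs0 (Fin.last (n + 1))
      gcongr
      exact hmono (Fin.castSucc_le_castSucc_iff.2 (Fin.le_last i))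
    calc s (Fin.last (n + 1)) * (rangeRadius M s i.castSucc + M)
        ≤ s (Fin.last (n + 1)) * (rangeRadius M s (Fin.last n).castSucc + M) := by
          gcongr
          exact hs0 _
      _ = rangeRadius M s (Fin.last (n + 1)) := by
          rw [rangeRadius_castSucc, rangeRadius_last]
          exact hself _ _ _ rfl
  | cast i =>
    calc s i.castSucc * (rangeRadius M s j + M)
        ≤ s i.castSucc * (rangeRadius M s (Fin.last (n + 1)) + M) := by
          gcongr
          · exact hs0 _
          · exact rangeRadius_le_last hM hs0 hs1 hmono j
      _ = rangeRadius M s i.castSucc := by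
          rw [rangeRadius_last, rangeRadius_castSucc]
          exact hself _ _ _ (mul_comm _ _)

end RangeRadius

section RangeBounds

variable {n : ℕ} {M θ : ℝ} {s g : Fin (n + 2) → ℝ}

theorem le_sub_rangeRadius_div {A : ℝ}
    (hA : A = min
      (⨅ k : Fin (n + 1), (g k.castSucc - M * s k.castSucc * (1 + s (Fin.last (n + 1))) /
        (θ * (1 - s ((Fin.last n).castSucc) * s (Fin.last (n + 1))))))
      (g (Fin.last (n + 1)) - M * s (Fin.last (n + 1)) * (1 + s ((Fin.last n).castSucc)) /
        (θ * (1 - s ((Fin.last n).castSucc) * s (Fin.last (n + 1))))))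
    (k : Fin (n + 2)) : A ≤ g k - rangeRadius M s k / θ := by
  induction k using Fin.lastCases with
  | last =>
    rw [rangeRadius_last, div_div, mul_comm (1 - _) θ, hA]
    exact min_le_right _ _
  | cast i =>
    rw [rangeRadius_castSucc, div_div, mul_comm (1 - _) θ, hA]
    exact (min_le_left _ _).trans (ciInf_le (Finite.bddBelow_range _) i)

theorem add_rangeRadius_div_le {B : ℝ}
    (hB : B = max
      (⨆ k : Fin (n + 1), (g k.castSucc + M * s k.castSucc * (1 + s (Fin.last (n + 1))) /
        (θ * (1 - s ((Fin.last n).castSucc) * s (Fin.last (n + 1))))))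
      (g (Fin.last (n + 1)) + M * s (Fin.last (n + 1)) * (1 + s ((Fin.last n).castSucc)) /
        (θ * (1 - s ((Fin.last n).castSucc) * s (Fin.last (n + 1))))))
    (k : Fin (n + 2)) : g k + rangeRadius M s k / θ ≤ B := by
  induction k using Fin.lastCases with
  | last =>
    rw [rangeRadius_last, div_div, mul_comm (1 - _) θ, hB]
    exact le_max_right _ _
  | cast i =>
    rw [rangeRadius_castSucc, div_div, mul_comm (1 - _) θ, hB]
    refine le_max_of_le_left ?_
    apply le_ciSup (Finite.bddAbove_range _) i

end RangeBounds

theorem fst_mem_Icc_of_eq_iUnion_image {ι : Type*} {G : Set (ℝ × ℝ)} (hG : IsCompact G)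
    {a b c d e : ι → ℝ} (hGfix : G = ⋃ k, fifMap (a k) (b k) (c k) (d k) (e k) '' G)
    (ha0 : ∀ k, 0 ≤ a k) (ha1 : ∀ k, a k < 1) {x₀ xₙ : ℝ} (h₀ : ∀ k, x₀ ≤ a k * x₀ + b k)
    (hₙ : ∀ k, a k * xₙ + b k ≤ xₙ) :
    ∀ z ∈ G, z.1 ∈ Icc x₀ xₙ := by
  intro z hz
  have hlo := hG.le_of_eq_iUnion_image hGfix (φ := fun p ↦ -p.1)
    continuous_fst.neg.continuousOn (a := a) (b := fun k ↦ -b k) (L := -x₀)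
    (fun k p ↦ by simp only [fifMap]; linarith) ha0 ha1
    (fun k ↦ by linarith [h₀ k]) z hz
  have hhi := hG.le_of_eq_iUnion_image hGfix continuous_fst.continuousOn (a := a) (b := b)
    (fun k p ↦ le_rfl) ha0 ha1 hₙ z hz
  exact ⟨neg_le_neg_iff.1 hlo, hhi⟩

theorem exists_weightedTaxicab_le_rangeRadius {n : ℕ} {G : Set (ℝ × ℝ)} (hG : IsCompact G)
    {a b c d e : Fin (n + 2) → ℝ}
    (hGfix : G = ⋃ k, fifMap (a k) (b k) (c k) (d k) (e k) '' G)
    (ha0 : ∀ k, 0 ≤ a k) (ha1 : ∀ k, a k < 1) (hd : ∀ k, 0 ≤ d k ∧ d k < 1) {θ : ℝ}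
    (hθ : 0 ≤ θ) {s : Fin (n + 2) → ℝ} (hs : ∀ k, max (d k) (a k + θ * |c k|) ≤ s k)
    (hs1 : ∀ k, s k < 1) (hmono : Monotone s) {M : ℝ}
    (hM : ∀ j k, weightedTaxicab θ (fifFixedPoint (a j) (b j) (c j) (d j) (e j))
      (fifFixedPoint (a k) (b k) (c k) (d k) (e k)) ≤ M) :
    ∀ z ∈ G, ∃ k, weightedTaxicab θ z (fifFixedPoint (a k) (b k) (c k) (d k) (e k)) ≤
      rangeRadius M s k := by
  have hs0 : ∀ k, 0 ≤ s k := fun k ↦ (hd k).1.trans ((le_max_left _ _).trans (hs k))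
  have hM0 : 0 ≤ M := (hM 0 0).trans' (by simp [weightedTaxicab])
  refine hG.exists_le_of_eq_iUnion_image hGfix (weightedTaxicab_triangle hθ) hs0 hs1
    (fun k p q ↦ (weightedTaxicab_fifMap_le hθ (ha0 k) (hd k).1 p q).trans
      (mul_le_mul_of_nonneg_right (hs k) (by unfold weightedTaxicab; positivity)))
    (fun k ↦ fifMap_fifFixedPoint (ha1 k).ne (hd k).2.ne)
    (fun k ↦ (continuous_weightedTaxicab_left _).continuousOn) fun j k ↦ ?_
  rcases eq_or_ne j k with rfl | hjk
  · simp only [weightedTaxicab, sub_self, abs_zero, mul_zero, add_zero]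
    nlinarith [rangeRadius_nonneg hM0 hs0 hs1 j, hs1 j]
  · exact (mul_le_mul_of_nonneg_left (by linarith [hM j k]) (hs0 k)).trans
      (mul_rangeRadius_add_le hM0 hs0 hs1 hmono hjk)

theorem fif_graph_in_rectangle_general
    (n : ℕ) (x : Fin (n + 3) → ℝ) (hx : StrictMono x)
    (d : Fin (n + 2) → ℝ) (hd : ∀ k, 0 ≤ d k ∧ d k < 1)
    (a b c e : Fin (n + 2) → ℝ)
    (ha : ∀ k, a k = (x k.succ - x k.castSucc) / (x (Fin.last (n + 2)) - x 0))
    (hb : ∀ k, b k = (x (Fin.last (n + 2)) * x k.castSucc - x 0 * x k.succ) /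
        (x (Fin.last (n + 2)) - x 0))
    (θ : ℝ)
    (hθ : θ = if ∀ k, c k = 0 then 1 else (1 - ⨆ k, a k) / (2 * ⨆ k, |c k|))
    (f : Fin (n + 2) → ℝ × ℝ → ℝ × ℝ)
    (hf : ∀ k (p : ℝ × ℝ), f k p = (a k * p.1 + b k, c k * p.1 + d k * p.2 + e k))
    (s : Fin (n + 2) → ℝ)
    (hs : ∀ k, s k = max (d k) (a k + θ * |c k|))
    (hmono : Monotone s)
    (γ : Fin (n + 2) → ℝ × ℝ)
    (hγ : ∀ k, γ k = (b k / (1 - a k),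
        b k * c k / ((1 - a k) * (1 - d k)) + e k / (1 - d k)))
    (M : ℝ)
    (hM : M = ⨆ p : Fin (n + 2) × Fin (n + 2),
        (|(γ p.1).1 - (γ p.2).1| + θ * |(γ p.1).2 - (γ p.2).2|))
    (A B : ℝ)
    (hA : A = min
      (⨅ k : Fin (n + 1),
        (b k.castSucc * c k.castSucc /
            ((1 - a k.castSucc) * (1 - d k.castSucc)) +
          e k.castSucc / (1 - d k.castSucc) -
          M * s k.castSucc * (1 + s (Fin.last (n + 1))) /
            (θ * (1 - s ((Fin.last n).castSucc) * s (Fin.last (n + 1))))))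
      (b (Fin.last (n + 1)) * c (Fin.last (n + 1)) /
          ((1 - a (Fin.last (n + 1))) * (1 - d (Fin.last (n + 1)))) +
        e (Fin.last (n + 1)) / (1 - d (Fin.last (n + 1))) -
        M * s (Fin.last (n + 1)) * (1 + s ((Fin.last n).castSucc)) /
          (θ * (1 - s ((Fin.last n).castSucc) * s (Fin.last (n + 1))))))
    (hB : B = max
      (⨆ k : Fin (n + 1),
        (b k.castSucc * c k.castSucc /
            ((1 - a k.castSucc) * (1 - d k.castSucc)) +
          e k.castSucc / (1 - d k.castSucc) +
          M * s k.castSucc * (1 + s (Fin.last (n + 1))) /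
            (θ * (1 - s ((Fin.last n).castSucc) * s (Fin.last (n + 1))))))
      (b (Fin.last (n + 1)) * c (Fin.last (n + 1)) /
          ((1 - a (Fin.last (n + 1))) * (1 - d (Fin.last (n + 1)))) +
        e (Fin.last (n + 1)) / (1 - d (Fin.last (n + 1))) +
        M * s (Fin.last (n + 1)) * (1 + s ((Fin.last n).castSucc)) /
          (θ * (1 - s ((Fin.last n).castSucc) * s (Fin.last (n + 1))))))
    (G : Set (ℝ × ℝ)) (hGc : IsCompact G)
    (hGfix : G = ⋃ k, f k '' G) :
    G ⊆ Set.Icc (x 0) (x (Fin.last (n + 2))) ×ˢ Set.Icc A B := by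
  have hL : x 0 < x (Fin.last (n + 2)) := hx Fin.last_pos
  have hnode : ∀ k, a k * x 0 + b k = x k.castSucc ∧ a k * x (Fin.last (n + 2)) + b k = x k.succ :=
    fun k ↦ affine_interpolation_endpoints hL.ne (ha k) (hb k)
  have ha0 : ∀ k, 0 ≤ a k := fun k ↦ by
    rw [ha k]
    exact div_nonneg (sub_nonneg.2 (hx.monotone (Fin.castSucc_le_succ k))) (sub_nonneg.2 hL.le)
  have ha1 : ∀ k, a k < 1 := fun k ↦ by
    rw [ha k, div_lt_one (sub_pos.2 hL)]
    exact succ_sub_castSucc_lt_last_sub_zero hx k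
  obtain ⟨hθ0, hθc⟩ := theta_pos_and_add_mul_abs_lt_one ha1 hθ
  have hs1 : ∀ k, s k < 1 := fun k ↦ (hs k).symm ▸ max_lt (hd k).2 (hθc k)
  obtain rfl : f = fun k ↦ fifMap (a k) (b k) (c k) (d k) (e k) := funext₂ hf
  obtain rfl : γ = fun k ↦ fifFixedPoint (a k) (b k) (c k) (d k) (e k) := funext hγ
  intro z hz
  obtain ⟨k, hk⟩ := exists_weightedTaxicab_le_rangeRadius hGc hGfix ha0 ha1 hd hθ0.le
    (fun k ↦ (hs k).ge) hs1 hmono (fun j k ↦ hM ▸ le_ciSup (Finite.bddAbove_range _) (j, k)) z hz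
  obtain ⟨hlo, hhi⟩ := snd_mem_Icc_of_weightedTaxicab_le hθ0 hk
  let g k := (fifFixedPoint (a k) (b k) (c k) (d k) (e k)).2
  refine ⟨fst_mem_Icc_of_eq_iUnion_image hGc hGfix ha0 ha1 (fun k ↦ ?_) (fun k ↦ ?_) z hz,
    (le_sub_rangeRadius_div (g := g) hA k).trans hlo,
    hhi.trans (add_rangeRadius_div_le (g := g) hB k)⟩
  · linarith [(hnode k).1, hx.monotone (Fin.zero_le k.castSucc)]
  · linarith [(hnode k).2, hx.monotone (Fin.le_last k.succ)]

/-- In the affine FIF framework with `n + 2 ≥ 2` maps, with `A`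
and `B` defined as in the range estimate, any nonempty compact `G ⊆ ℝ²` with
`G = ⋃_k f_k(G)` — in particular the graph of the affine fractal interpolation
function — is contained in the rectangle `[x₀, x_N] × [A, B]`. -/
theorem fif_graph_in_rectangle
    (n : ℕ) (x y : Fin (n + 3) → ℝ) (hx : StrictMono x)
    (d : Fin (n + 2) → ℝ) (hd : ∀ k, 0 ≤ d k ∧ d k < 1)
    (a b c e : Fin (n + 2) → ℝ)
    (ha : ∀ k, a k = (x k.succ - x k.castSucc) / (x (Fin.last (n + 2)) - x 0))
    (hb : ∀ k, b k = (x (Fin.last (n + 2)) * x k.castSucc - x 0 * x k.succ) /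
        (x (Fin.last (n + 2)) - x 0))
    (hc : ∀ k, c k = (y k.succ - y k.castSucc) / (x (Fin.last (n + 2)) - x 0) -
        d k * (y (Fin.last (n + 2)) - y 0) / (x (Fin.last (n + 2)) - x 0))
    (he : ∀ k, e k = (x (Fin.last (n + 2)) * y k.castSucc - x 0 * y k.succ) /
        (x (Fin.last (n + 2)) - x 0) -
        d k * (x (Fin.last (n + 2)) * y 0 - x 0 * y (Fin.last (n + 2))) /
        (x (Fin.last (n + 2)) - x 0))
    (θ : ℝ)
    (hθ : θ = if ∀ k, c k = 0 then 1 else (1 - ⨆ k, a k) / (2 * ⨆ k, |c k|))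
    (f : Fin (n + 2) → ℝ × ℝ → ℝ × ℝ)
    (hf : ∀ k (p : ℝ × ℝ), f k p = (a k * p.1 + b k, c k * p.1 + d k * p.2 + e k))
    (s : Fin (n + 2) → ℝ)
    (hs : ∀ k, s k = max (d k) (a k + θ * |c k|))
    (hmono : Monotone s)
    (γ : Fin (n + 2) → ℝ × ℝ)
    (hγ : ∀ k, γ k = (b k / (1 - a k),
        b k * c k / ((1 - a k) * (1 - d k)) + e k / (1 - d k)))
    (M : ℝ)
    (hM : M = ⨆ p : Fin (n + 2) × Fin (n + 2),
        (|(γ p.1).1 - (γ p.2).1| + θ * |(γ p.1).2 - (γ p.2).2|))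
    (A B : ℝ)
    (hA : A = min
      (⨅ k : Fin (n + 1),
        (b k.castSucc * c k.castSucc /
            ((1 - a k.castSucc) * (1 - d k.castSucc)) +
          e k.castSucc / (1 - d k.castSucc) -
          M * s k.castSucc * (1 + s (Fin.last (n + 1))) /
            (θ * (1 - s ((Fin.last n).castSucc) * s (Fin.last (n + 1))))))
      (b (Fin.last (n + 1)) * c (Fin.last (n + 1)) /
          ((1 - a (Fin.last (n + 1))) * (1 - d (Fin.last (n + 1)))) +
        e (Fin.last (n + 1)) / (1 - d (Fin.last (n + 1))) -
        M * s (Fin.last (n + 1)) * (1 + s ((Fin.last n).castSucc)) /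
          (θ * (1 - s ((Fin.last n).castSucc) * s (Fin.last (n + 1))))))
    (hB : B = max
      (⨆ k : Fin (n + 1),
        (b k.castSucc * c k.castSucc /
            ((1 - a k.castSucc) * (1 - d k.castSucc)) +
          e k.castSucc / (1 - d k.castSucc) +
          M * s k.castSucc * (1 + s (Fin.last (n + 1))) /
            (θ * (1 - s ((Fin.last n).castSucc) * s (Fin.last (n + 1))))))
      (b (Fin.last (n + 1)) * c (Fin.last (n + 1)) /
          ((1 - a (Fin.last (n + 1))) * (1 - d (Fin.last (n + 1)))) +
        e (Fin.last (n + 1)) / (1 - d (Fin.last (n + 1))) +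
        M * s (Fin.last (n + 1)) * (1 + s ((Fin.last n).castSucc)) /
          (θ * (1 - s ((Fin.last n).castSucc) * s (Fin.last (n + 1))))))
    (G : Set (ℝ × ℝ)) (hG : G.Nonempty) (hGc : IsCompact G)
    (hGfix : G = ⋃ k, f k '' G) :
    G ⊆ Set.Icc (x 0) (x (Fin.last (n + 2))) ×ˢ Set.Icc A B :=
  fif_graph_in_rectangle_general n x hx d hd a b c e ha hb θ hθ f hf s hs hmono γ hγ M hM A B hA hB
    G hGc hGfix
end

section
/- Let (X,d) be a complete metric space, let n ≥ 1, and let f₁,…,fₙ : X → X be maps such that each fᵢ is Lipschitz with constant sᵢ < 1; set s = maxᵢ sᵢ. Let A be the attractor, i.e. the unique nonempty compact set with A = ⋃ᵢ fᵢ(A). For each m ∈ ℕ and each word w = (k₁,…,k_m) ∈ {1,…,n}^m, let γ_w denote the unique fixed point of the composition f_{k₁} ∘ … ∘ f_{k_m}, let M_m = max over pairs of words w, w' of length m of d(γ_w, γ_{w'}), and define C_m = ⋃_{w ∈ {1,…,n}^m} B[γ_w, M_m s^m (1+s^m)/(1−s^{2m})]. Then A ⊆ C_m for every m, and the Hausdorff–Pompeiu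 distance h(C_m, A) tends to 0 as m → ∞. -/
/-!
For a word `w` of length `m + 1` the composition `g_w` is a contraction with ratio
`t = s ^ (m + 1)` mapping the compact set `A` into itself, so its fixed point `γ_w` lies in `A`;
moreover `A` is covered by the images `g_w '' A`. Let `D` be the largest distance from a point
of `A` to some `γ_w`. Writing `a = g_v b` with `b ∈ A` gives `d(a, γ_v) ≤ t D`, hence
`d(a, γ_w) ≤ t D + M` and `D ≤ M / (1 - t)`. So every `a ∈ A` lies within `t M / (1 - t)` of
some `γ_v`, and this is the given radius since `(1 + t) / (1 - t²) = 1 / (1 - t)`. As the centres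
lie in `A`, the Hausdorff distance is at most this radius, which is at most
`s ^ (m + 1) diam A / (1 - s) → 0`.
-/

open Set Metric Filter NNReal Function

def wordMap {ι X : Type*} (f : ι → X → X) {m : ℕ} (w : Fin m → ι) : X → X :=
  (List.ofFn fun j => f (w j)).foldr (· ∘ ·) id

section wordMap

variable {ι X : Type*} (f : ι → X → X)

theorem wordMap_cons {m : ℕ} (i : ι) (w : Fin m → ι) :
    wordMap f (Fin.cons i w : Fin (m + 1) → ι) = f i ∘ wordMap f w := by
  simp [wordMap, List.ofFn_succ]

variable {f}

theorem LipschitzWith.wordMap [PseudoEMetricSpace X] {K : ℝ≥0}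
    (hf : ∀ i, LipschitzWith K (f i)) : ∀ {m : ℕ} (w : Fin m → ι),
    LipschitzWith (K ^ m) (_root_.wordMap f w)
  | 0, _ => by simpa [_root_.wordMap] using LipschitzWith.id
  | m + 1, w => by
    rw [← Fin.cons_self_tail w, wordMap_cons, pow_succ']
    exact (hf _).comp (LipschitzWith.wordMap hf _)

theorem Set.MapsTo.wordMap {A : Set X} (hf : ∀ i, MapsTo (f i) A A) :
    ∀ {m : ℕ} (w : Fin m → ι), MapsTo (_root_.wordMap f w) A A
  | 0, _ => by simpa [_root_.wordMap] using mapsTo_id A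
  | m + 1, w => by
    rw [← Fin.cons_self_tail w, wordMap_cons]
    exact (hf _).comp (Set.MapsTo.wordMap hf _)

theorem subset_iUnion_image_wordMap {A : Set X} (hA : A ⊆ ⋃ i, f i '' A) :
    ∀ m : ℕ, A ⊆ ⋃ w : Fin m → ι, wordMap f w '' A
  | 0 => fun a ha => mem_iUnion.2 ⟨Fin.elim0, a, ha, rfl⟩
  | m + 1 => fun a ha => by
    obtain ⟨i, b, hb, rfl⟩ := mem_iUnion.1 (hA ha)
    obtain ⟨w, c, hc, rfl⟩ := mem_iUnion.1 (subset_iUnion_image_wordMap hA m hb)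
    exact mem_iUnion.2 ⟨Fin.cons i w, c, hc, by rw [wordMap_cons]; rfl⟩

end wordMap

section covering

variable {ι X : Type*} [MetricSpace X]

theorem nonneg_of_dist_le_mul [Nontrivial X] {Y : Type*} [PseudoMetricSpace Y] {g : X → Y}
    {c : ℝ} (hg : ∀ p q, dist (g p) (g q) ≤ c * dist p q) : 0 ≤ c := by
  obtain ⟨p, q, hpq⟩ := exists_pair_ne X
  exact nonneg_of_mul_nonneg_left (dist_nonneg.trans (hg p q)) (dist_pos.2 hpq)

theorem ContractingWith.mem_of_isFixedPt {K : ℝ≥0} {g : X → X} (hg : ContractingWith K g)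
    {A : Set X} (hAc : IsComplete A) (hA : A.Nonempty) (hgA : MapsTo g A A) {x : X}
    (hx : IsFixedPt g x) : x ∈ A := by
  obtain ⟨a, ha⟩ := hA
  obtain ⟨y, hyA, hy, -⟩ :=
    ContractingWith.exists_fixedPoint' hAc hgA (hg.restrict hgA) ha (edist_ne_top _ _)
  rwa [hg.fixedPoint_unique' hx hy]

variable {A : Set X} {g : ι → X → X} {t : ℝ≥0} {γ : ι → X}

theorem exists_dist_fixedPoint_le_mul (hg : ∀ w, LipschitzWith t (g w))
    (hA : A ⊆ ⋃ w, g w '' A) (hγ : ∀ w, IsFixedPt (g w) (γ w)) {D : ℝ}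
    (hD : ∀ b ∈ A, ∀ w, dist b (γ w) ≤ D) {a : X} (ha : a ∈ A) :
    ∃ v, dist a (γ v) ≤ t * D := by
  obtain ⟨v, b, hb, rfl⟩ := mem_iUnion.1 (hA ha)
  refine ⟨v, ?_⟩
  calc dist (g v b) (γ v) = dist (g v b) (g v (γ v)) := by rw [hγ v]
    _ ≤ t * dist b (γ v) := (hg v).dist_le_mul b (γ v)
    _ ≤ t * D := by gcongr; exact hD b hb v

theorem dist_fixedPoint_le_div [Finite ι] (hAb : Bornology.IsBounded A) (ht : t < 1)
    (hg : ∀ w, LipschitzWith t (g w)) (hA : A ⊆ ⋃ w, g w '' A) (hγA : ∀ w, γ w ∈ A)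
    (hγ : ∀ w, IsFixedPt (g w) (γ w)) {M : ℝ} (hM : ∀ v w, dist (γ v) (γ w) ≤ M)
    {a : X} (ha : a ∈ A) (w : ι) : dist a (γ w) ≤ M / (1 - t) := by
  have : Nonempty (A × ι) := ⟨(⟨a, ha⟩, w)⟩
  set D := ⨆ p : A × ι, dist (p.1 : X) (γ p.2)
  have hbdd : BddAbove (range fun p : A × ι => dist (p.1 : X) (γ p.2)) :=
    ⟨diam A, forall_mem_range.2 fun p => dist_le_diam_of_mem hAb p.1.2 (hγA p.2)⟩
  have hle : ∀ b ∈ A, ∀ w, dist b (γ w) ≤ D := fun b hb w => le_ciSup hbdd (⟨b, hb⟩, w)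
  have hDD : D ≤ M + t * D := ciSup_le fun ⟨⟨b, hb⟩, w⟩ => by
    obtain ⟨v, hv⟩ := exists_dist_fixedPoint_le_mul hg hA hγ hle hb
    linarith [dist_triangle b (γ v) (γ w), hM v w]
  have ht' : (0 : ℝ) < 1 - t := sub_pos.2 (by exact_mod_cast ht)
  exact (hle a ha w).trans ((le_div_iff₀ ht').2 (by linarith))

theorem subset_iUnion_closedBall_fixedPoint [Finite ι] (hAb : Bornology.IsBounded A)
    (ht : t < 1) (hg : ∀ w, LipschitzWith t (g w)) (hA : A ⊆ ⋃ w, g w '' A)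
    (hγA : ∀ w, γ w ∈ A)
    (hγ : ∀ w, IsFixedPt (g w) (γ w)) {M : ℝ} (hM : ∀ v w, dist (γ v) (γ w) ≤ M) :
    A ⊆ ⋃ w, closedBall (γ w) (t * (M / (1 - t))) := fun _ ha =>
  have ⟨v, hv⟩ := exists_dist_fixedPoint_le_mul hg hA hγ
    (fun _ hb w => dist_fixedPoint_le_div hAb ht hg hA hγA hγ hM hb w) ha
  mem_iUnion.2 ⟨v, hv⟩

theorem hausdorffDist_iUnion_closedBall_le {c : ι → X} {r : ℝ} (hA₀ : A.Nonempty)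
    (hc : ∀ w, c w ∈ A) (hA : A ⊆ ⋃ w, closedBall (c w) r) :
    hausdorffDist (⋃ w, closedBall (c w) r) A ≤ r := by
  obtain ⟨w₀, hw₀⟩ := mem_iUnion.1 (hA hA₀.some_mem)
  have hr : 0 ≤ r := nonempty_closedBall.1 ⟨_, hw₀⟩
  refine hausdorffDist_le_of_mem_dist hr (fun x hx => ?_) fun x hx => ⟨x, hA hx, by simpa⟩
  obtain ⟨w, hw⟩ := mem_iUnion.1 hx
  exact ⟨c w, hc w, hw⟩

end covering

theorem mul_mul_one_add_div_one_sub_sq {u : ℝ} (hu : 0 ≤ u) (M : ℝ) :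
    M * u * (1 + u) / (1 - u ^ 2) = u * (M / (1 - u)) := by
  rw [show 1 - u ^ 2 = (1 - u) * (1 + u) by ring, mul_div_mul_right _ _ (by positivity)]
  ring

theorem attractor_coverings_converge_general
    {X : Type*} [MetricSpace X]
    (n : ℕ) (f : Fin (n + 1) → X → X) (s' : Fin (n + 1) → ℝ)
    (hs' : ∀ i, s' i < 1)
    (hf : ∀ i, ∀ p q : X, dist (f i p) (f i q) ≤ s' i * dist p q)
    (s : ℝ) (hs : s = ⨆ i, s' i)
    (A : Set X) (hA : A.Nonempty) (hAc : IsCompact A)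
    (hAfix : A = ⋃ i, f i '' A)
    (γ : ∀ m : ℕ, (Fin (m + 1) → Fin (n + 1)) → X)
    (hγ : ∀ (m : ℕ) (w : Fin (m + 1) → Fin (n + 1)),
      ((List.ofFn fun j => f (w j)).foldr (· ∘ ·) id) (γ m w) = γ m w)
    (M : ℕ → ℝ)
    (hM : ∀ m : ℕ, M m =
      ⨆ p : (Fin (m + 1) → Fin (n + 1)) × (Fin (m + 1) → Fin (n + 1)),
        dist (γ m p.1) (γ m p.2))
    (C : ℕ → Set X)
    (hC : ∀ m : ℕ, C m = ⋃ w : Fin (m + 1) → Fin (n + 1),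
      Metric.closedBall (γ m w)
        (M m * s ^ (m + 1) * (1 + s ^ (m + 1)) / (1 - s ^ (2 * (m + 1))))) :
    (∀ m : ℕ, A ⊆ C m) ∧
    Filter.Tendsto (fun m => Metric.hausdorffDist (C m) A) Filter.atTop (nhds 0) := by
  rcases subsingleton_or_nontrivial X with hX | hX
  · have hCu : ∀ m, C m = univ := fun m => Nonempty.eq_univ ⟨γ m 0, by
      simp [hC, hM, Subsingleton.elim (γ m _) (γ m 0)]⟩
    simp [hA.eq_univ, hCu]
  obtain ⟨hs0, hs1⟩ : 0 ≤ s ∧ s < 1 := by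
    obtain ⟨i₀, hi₀⟩ := exists_eq_ciSup_of_finite (f := s')
    exact hs ▸ hi₀ ▸ ⟨nonneg_of_dist_le_mul (hf i₀), hs' i₀⟩
  set K : ℝ≥0 := ⟨s, hs0⟩
  have hK : ∀ m, K ^ (m + 1) < 1 := fun m => pow_lt_one₀ K.2 hs1 m.succ_ne_zero
  have hfK : ∀ i, LipschitzWith K (f i) := fun i => .of_dist_le_mul fun p q =>
    (hf i p q).trans (by gcongr; exact (le_ciSup (Finite.bddAbove_range s') i).trans hs.ge)
  have hfA : ∀ i, MapsTo (f i) A A := fun i => mapsTo_iff_image_subset.2 <|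
    (subset_iUnion (fun j => f j '' A) i).trans hAfix.superset
  have hγA : ∀ m w, γ m w ∈ A := fun m w =>
    ContractingWith.mem_of_isFixedPt ⟨hK m, LipschitzWith.wordMap hfK w⟩
      hAc.isComplete hA (MapsTo.wordMap hfA w) (hγ m w)
  have hMd : ∀ m v w, dist (γ m v) (γ m w) ≤ M m := fun m v w => by
    rw [hM]
    exact le_ciSup (Finite.bddAbove_range fun p : (_ × _) => dist (γ m p.1) (γ m p.2)) (v, w)
  have hMA : ∀ m, M m ≤ diam A := fun m => hM m ▸ ciSup_le fun p =>
    dist_le_diam_of_mem hAc.isBounded (hγA m p.1) (hγA m p.2)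
  have hC' : ∀ m, C m = ⋃ w, closedBall (γ m w) (s ^ (m + 1) * (M m / (1 - s ^ (m + 1)))) :=
    fun m => by rw [hC, pow_mul', mul_mul_one_add_div_one_sub_sq (by positivity)]
  have hcover : ∀ m, A ⊆ C m := fun m => hC' m ▸
    subset_iUnion_closedBall_fixedPoint hAc.isBounded (hK m) (LipschitzWith.wordMap hfK)
      (subset_iUnion_image_wordMap hAfix.subset _) (hγA m) (hγ m) (hMd m)
  refine ⟨hcover, squeeze_zero (fun _ => hausdorffDist_nonneg) (fun m => ?_)
    (g := fun m => s ^ (m + 1) * (diam A / (1 - s))) ?_⟩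
  · rw [hC']
    refine (hausdorffDist_iUnion_closedBall_le hA (hγA m) (hC' m ▸ hcover m)).trans ?_
    have : 0 < 1 - s := sub_pos.2 hs1
    gcongr
    · exact hMA m
    · exact pow_le_of_le_one hs0 hs1.le m.succ_ne_zero
  · simpa using ((tendsto_pow_atTop_nhds_zero_of_lt_one hs0 hs1).comp
      (tendsto_add_atTop_nat 1)).mul_const (diam A / (1 - s))

/-- For an IFS `f₀, …, fₙ` (`n+1 ≥ 1` maps) on a complete metric
space, each Lipschitz with constant `sᵢ < 1`, with `s = maxᵢ sᵢ`, attractor `A`,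
and, for every `m` and every word `w` of length `m+1` (i.e. of length `≥ 1`), fixed
point `γ m w` of the composition `f_{w 0} ∘ … ∘ f_{w m}`:  setting
`M m = max` over pairs of words of length `m+1` of `d(γ m w, γ m w')` and
`C m = ⋃_w B[γ m w, (M m) s^{m+1} (1+s^{m+1})/(1 − s^{2(m+1)})]`,
we have `A ⊆ C m` for every `m` and `h(C m, A) → 0`. -/
theorem attractor_coverings_converge
    {X : Type*} [MetricSpace X] [CompleteSpace X]
    (n : ℕ) (f : Fin (n + 1) → X → X) (s' : Fin (n + 1) → ℝ)
    (hs' : ∀ i, s' i < 1)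
    (hf : ∀ i, ∀ p q : X, dist (f i p) (f i q) ≤ s' i * dist p q)
    (s : ℝ) (hs : s = ⨆ i, s' i)
    (A : Set X) (hA : A.Nonempty) (hAc : IsCompact A)
    (hAfix : A = ⋃ i, f i '' A)
    (γ : ∀ m : ℕ, (Fin (m + 1) → Fin (n + 1)) → X)
    (hγ : ∀ (m : ℕ) (w : Fin (m + 1) → Fin (n + 1)),
      ((List.ofFn fun j => f (w j)).foldr (· ∘ ·) id) (γ m w) = γ m w)
    (M : ℕ → ℝ)
    (hM : ∀ m : ℕ, M m =
      ⨆ p : (Fin (m + 1) → Fin (n + 1)) × (Fin (m + 1) → Fin (n + 1)),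
        dist (γ m p.1) (γ m p.2))
    (C : ℕ → Set X)
    (hC : ∀ m : ℕ, C m = ⋃ w : Fin (m + 1) → Fin (n + 1),
      Metric.closedBall (γ m w)
        (M m * s ^ (m + 1) * (1 + s ^ (m + 1)) / (1 - s ^ (2 * (m + 1))))) :
    (∀ m : ℕ, A ⊆ C m) ∧
    Filter.Tendsto (fun m => Metric.hausdorffDist (C m) A) Filter.atTop (nhds 0) :=
  attractor_coverings_converge_general n f s' hs' hf s hs A hA hAc hAfix γ hγ M hM C hC
end
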